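/- arXiv:1912.11195 — 2 statements merged into one kernel-verified Lean document; each statement's English description precedes it below -/
import Mathlib

section
/- Let G_k (1 ≤ k ≤ M) be hermitian idempotent matrices (G_k† = G_k, G_k² = I) such that for each pair k ≠ ℓ either {G_k, G_ℓ} = 0 (when a_k·a_ℓ = 0) or [G_k, G_ℓ] = 0 (when a_k·a_ℓ = 1), where a_1,...,a_M is an enumeration of the parity-1 elements of (Z/2Z)^n. Define Q_k = G_k ⊗ 𝖰 and Z_{kℓ} = (−i)^{1−a_k·a_ℓ} G_k G_ℓ ⊗ 𝖧 where 𝖰² = 𝖧 and [𝖧,𝖰] = 0. Then [[Q_k, Q_ℓ]] = 2δ_{kℓ} (I ⊗ 𝖧) + 2 i^{1−a_k·a_ℓ} Z_{kℓ} for the Z_2^n-graded bracket, and each Z_{kℓ} has vanishing graded bracket with every Q_m. -/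
open scoped TensorProduct

/-- given hermitian idempotent G_k obeying the (anti)commutation rules
    dictated by an enumeration a_1,…,a_M of the parity-1 elements of (Z/2Z)^n, and
    sQ, sH with sQ² = sH, [sH,sQ] = 0, the operators Q_k = G_k ⊗ sQ and
    Z_{kℓ} = (−i)^{1−a_k·a_ℓ} G_kG_ℓ ⊗ sH (k ≠ ℓ; Z_{kk} = 0) satisfy
    [[Q_k, Q_ℓ]] = 2δ_{kℓ}(1 ⊗ sH) + 2 i^{1−a_k·a_ℓ} Z_{kℓ}, and every Z_{kℓ} has
    vanishing graded bracket with every Q_m. -/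
theorem graded_SQM_relations {A B : Type*} [Ring A] [Ring B] [Algebra ℂ A] [Algebra ℂ B]
    {n M : ℕ} (hM : M = 2 ^ (n - 1))
    (a : Fin M → Fin n → ZMod 2)
    (hpar : ∀ k, (∑ j, a k j) = 1) (hinj : Function.Injective a)
    (G : Fin M → A) (hG2 : ∀ k, G k * G k = 1)
    (hanti : ∀ k ℓ, k ≠ ℓ → (∑ j, a k j * a ℓ j) = 0 → G k * G ℓ + G ℓ * G k = 0)
    (hcomm : ∀ k ℓ, k ≠ ℓ → (∑ j, a k j * a ℓ j) = 1 → G k * G ℓ - G ℓ * G k = 0)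
    (sQ sH : B) (hQ2 : sQ * sQ = sH) (hHQ : sH * sQ = sQ * sH)
    (Q : Fin M → A ⊗[ℂ] B) (hQdef : ∀ k, Q k = G k ⊗ₜ[ℂ] sQ)
    (Z : Fin M → Fin M → A ⊗[ℂ] B)
    (hZdef : ∀ k ℓ, Z k ℓ = if k = ℓ then 0 else
      ((-Complex.I) ^ (1 - (∑ j, a k j * a ℓ j).val)) • ((G k * G ℓ) ⊗ₜ[ℂ] sH)) :
    (∀ k ℓ, Q k * Q ℓ - ((-1 : ℂ) ^ (∑ j, a k j * a ℓ j).val) • (Q ℓ * Q k) =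
      (if k = ℓ then (2 : ℂ) • ((1 : A) ⊗ₜ[ℂ] sH) else 0) +
        ((2 : ℂ) * Complex.I ^ (1 - (∑ j, a k j * a ℓ j).val)) • Z k ℓ) ∧
    (∀ k ℓ m, Z k ℓ * Q m -
      ((-1 : ℂ) ^ (∑ j, (a k + a ℓ) j * a m j).val) • (Q m * Z k ℓ) = 0) := by

  have hzm : ∀ x : ZMod 2, x = 0 ∨ x = 1 := by decide
  have hv0 : (0 : ZMod 2).val = 0 := rfl
  have hv1 : (1 : ZMod 2).val = 1 := rfl
  have hv2 : (2 : ZMod 2).val = 0 := rfl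
  have hv11 : ((1 : ZMod 2) + 1).val = 0 := rfl
  have hv10 : ((1 : ZMod 2) + 0).val = 1 := rfl
  have hv01 : ((0 : ZMod 2) + 1).val = 1 := rfl
  have hv00 : ((0 : ZMod 2) + 0).val = 0 := rfl
  have hself : ∀ k, (∑ j, a k j * a k j) = 1 := by
    intro k
    have h2 : ∀ x : ZMod 2, x * x = x := by decide
    simp_rw [h2]
    exact hpar k
  have hsw : ∀ k m : Fin M, (G k * G m = G m * G k ∧ (∑ j, a k j * a m j) = 1)
      ∨ (G k * G m = -(G m * G k) ∧ (∑ j, a k j * a m j) = 0) := by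
    intro k m
    by_cases hkm : k = m
    · subst hkm; exact Or.inl ⟨rfl, hself k⟩
    · rcases hzm (∑ j, a k j * a m j) with h | h
      · exact Or.inr ⟨eq_neg_of_add_eq_zero_left (hanti k m hkm h), h⟩
      · exact Or.inl ⟨sub_eq_zero.mp (hcomm k m hkm h), h⟩
  constructor
  · intro k ℓ
    rw [hQdef, hQdef, hZdef]
    by_cases hkl : k = ℓ
    · subst hkl
      rw [if_pos rfl, if_pos rfl, hself k]
      simp only [Algebra.TensorProduct.tmul_mul_tmul, hG2, hQ2, hv1, pow_one,
        Nat.sub_self, pow_zero, hZdef, if_pos rfl, smul_zero, add_zero, neg_smul,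
        one_smul, sub_neg_eq_add, two_smul]
    · rw [if_neg hkl, if_neg hkl]
      rcases hsw k ℓ with ⟨hc, hs⟩ | ⟨hc, hs⟩
      · rw [hs]
        simp only [ZMod.val_one, pow_one, Nat.sub_self, pow_zero, one_smul,
          Algebra.TensorProduct.tmul_mul_tmul, hQ2, ← hc, mul_one, zero_add]
        rw [neg_one_smul, sub_neg_eq_add, two_smul]
      · rw [hs]
        have hc' : G ℓ * G k = -(G k * G ℓ) := by rw [hc]; simp
        have h2 : (2 * Complex.I * -Complex.I : ℂ) = 2 := by
          rw [mul_assoc]; simp [Complex.I_mul_I]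
        simp only [hv0, pow_zero, one_smul, Nat.sub_zero, pow_one,
          Algebra.TensorProduct.tmul_mul_tmul, hQ2, hc', zero_add,
          TensorProduct.neg_tmul, sub_neg_eq_add, smul_smul, h2, two_smul]
  · intro k ℓ m
    by_cases hkl : k = ℓ
    · rw [hZdef, if_pos hkl]; simp
    · rw [hZdef, if_neg hkl, hQdef]
      have ht : (∑ j, (a k + a ℓ) j * a m j)
          = (∑ j, a k j * a m j) + (∑ j, a ℓ j * a m j) := by
        rw [← Finset.sum_add_distrib]
        simp [add_mul]
      rcases hsw k m with ⟨hc1, hs1⟩ | ⟨hc1, hs1⟩ <;>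
        rcases hsw ℓ m with ⟨hc2, hs2⟩ | ⟨hc2, hs2⟩
      · have hA : G k * G ℓ * G m = G m * (G k * G ℓ) := by
          rw [mul_assoc, hc2, ← mul_assoc, hc1, mul_assoc]
        rw [ht, hs1, hs2]
        simp only [smul_mul_assoc, mul_smul_comm, Algebra.TensorProduct.tmul_mul_tmul,
          ← hHQ, hA, hv11, pow_zero, one_smul, sub_self]
      · have hA : G k * G ℓ * G m = -(G m * (G k * G ℓ)) := by
          rw [mul_assoc, hc2, mul_neg, ← mul_assoc, hc1, mul_assoc]
        rw [ht, hs1, hs2]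
        simp only [smul_mul_assoc, mul_smul_comm, Algebra.TensorProduct.tmul_mul_tmul,
          ← hHQ, hA, TensorProduct.neg_tmul, smul_neg, hv10, pow_one, neg_one_smul,
          neg_neg, sub_neg_eq_add, neg_add_cancel]
      · have hA : G k * G ℓ * G m = -(G m * (G k * G ℓ)) := by
          rw [mul_assoc, hc2, ← mul_assoc, hc1, neg_mul, mul_assoc]
        rw [ht, hs1, hs2]
        simp only [smul_mul_assoc, mul_smul_comm, Algebra.TensorProduct.tmul_mul_tmul,
          ← hHQ, hA, TensorProduct.neg_tmul, smul_neg, hv01, pow_one, neg_one_smul,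
          neg_neg, sub_neg_eq_add, neg_add_cancel]
      · have hA : G k * G ℓ * G m = G m * (G k * G ℓ) := by
          rw [mul_assoc, hc2, mul_neg, ← mul_assoc, hc1, neg_mul, neg_neg, mul_assoc]
        rw [ht, hs1, hs2]
        simp only [smul_mul_assoc, mul_smul_comm, Algebra.TensorProduct.tmul_mul_tmul,
          ← hHQ, hA, hv00, pow_zero, one_smul, sub_self]
end

section
/- Define G_1 = γ_1, G_m = (∏_{j=1}^{m−1} Γ_j^{a_j·a_m}) γ_m for 2 ≤ m ≤ M−1, and G_M = ∏_{j=1}^{M−1} Γ_j^{1−a_j·a_M}, where Γ_j = iγ_jγ̃_j in Cl(2(M−1)) with M = 2^{n−1} and a_1,…,a_M an enumeration of the parity-1 elements of (Z/2Z)^n. Then each G_k is hermitian with G_k² = I, and for k < ℓ: {G_k, G_ℓ} = 0 if a_k·a_ℓ = 0 and [G_k, G_ℓ] = 0 if a_k·a_ℓ = 1. -/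
/-- Γ_j := i γ_j γ̃_j, where g lists the 2(M−1) hermitian Clifford generators
    (γ_j = g j for j < M−1, γ̃_j = g (j + (M−1))); ℕ-guarded versions. -/
noncomputable def GammaOf {A : Type*} [Ring A] [Algebra ℂ A] {M : ℕ}
    (g : Fin (2 * (M - 1)) → A) (j : ℕ) : A :=
  if h : j < M - 1 then
    Complex.I • (g ⟨j, by omega⟩ * g ⟨j + (M - 1), by omega⟩)
  else 1

/-- The dot product a_k · a_ℓ ∈ {0,1} (as a natural number), ℕ-guarded in k, ℓ. -/
def dotOf {n M : ℕ} (a : Fin M → Fin n → ZMod 2) (k ℓ : ℕ) : ℕ :=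
  if h : k < M ∧ ℓ < M then (∑ j, a ⟨k, h.1⟩ j * a ⟨ℓ, h.2⟩ j).val else 0

/-- G_1 = γ_1, G_m = (∏_{j<m} Γ_j^{a_j·a_m}) γ_m for 2 ≤ m ≤ M−1, and
    G_M = ∏_{j<M−1} Γ_j^{1−a_j·a_M}  (0-based: G_k for k : Fin M). -/
noncomputable def Gmax {A : Type*} [Ring A] [Algebra ℂ A] {n M : ℕ}
    (g : Fin (2 * (M - 1)) → A) (a : Fin M → Fin n → ZMod 2) (k : Fin M) : A :=
  if k.val + 1 = M then
    ((List.range (M - 1)).map fun j => GammaOf g j ^ (1 - dotOf a j k.val)).prod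
  else
    ((List.range k.val).map fun j => GammaOf g j ^ dotOf a j k.val).prod *
      (if h : k.val < M - 1 then g ⟨k.val, by omega⟩ else 1)

section Aux
set_option linter.unusedSectionVars false

variable {A : Type*} [Ring A] [StarRing A] [Algebra ℂ A] [StarModule ℂ A] {M : ℕ}

lemma comm_left_of_anti {x a b : A} (h1 : x * a = -(a * x)) (h2 : x * b = -(b * x)) :
    x * (a * b) = (a * b) * x := by
  calc x * (a * b) = (x * a) * b := (mul_assoc _ _ _).symm
    _ = -(a * (x * b)) := by rw [h1, neg_mul, mul_assoc]
    _ = a * (b * x) := by rw [h2, mul_neg, neg_neg]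
    _ = (a * b) * x := (mul_assoc _ _ _).symm

lemma anti_pow {x y : A} (h : x * y = -(y * x)) (c : ℕ) :
    x * y ^ c = (-1 : A) ^ c * (y ^ c * x) := by
  induction c with
  | zero => simp
  | succ c ih =>
    calc x * y ^ (c + 1) = (x * y ^ c) * y := by rw [pow_succ, mul_assoc]
      _ = (-1:A) ^ c * (y ^ c * (x * y)) := by rw [ih]; rw [mul_assoc, mul_assoc]
      _ = (-1:A) ^ c * (y ^ c * -(y * x)) := by rw [h]
      _ = (-1:A) ^ (c+1) * (y ^ (c+1) * x) := by
          simp [pow_succ, mul_assoc, mul_neg, neg_mul]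

variable (g : Fin (2 * (M - 1)) → A)

lemma gsq (hcl : ∀ i j, g i * g j + g j * g i = if i = j then (2 : A) else 0)
    (i : Fin (2 * (M - 1))) : g i * g i = 1 := by
  have h := hcl i i
  rw [if_pos rfl] at h
  have h2 : (2:ℂ) • (g i * g i) = (2:ℂ) • (1:A) := by
    rw [two_smul, two_smul, h]; norm_num
  calc g i * g i = (2:ℂ)⁻¹ • ((2:ℂ) • (g i * g i)) := by rw [smul_smul]; norm_num
    _ = (2:ℂ)⁻¹ • ((2:ℂ) • (1:A)) := by rw [h2]
    _ = 1 := by rw [smul_smul]; norm_num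

lemma ganti (hcl : ∀ i j, g i * g j + g j * g i = if i = j then (2 : A) else 0)
    {i j : Fin (2 * (M - 1))} (h : i ≠ j) : g i * g j = -(g j * g i) := by
  have hh := hcl i j
  rw [if_neg h] at hh
  exact eq_neg_of_add_eq_zero_left hh


lemma Gamma_of_ge (j : ℕ) (hj : ¬ j < M - 1) : GammaOf g j = 1 := by
  rw [GammaOf, dif_neg hj]

lemma Gamma_star (hherm : ∀ i, star (g i) = g i)
    (hcl : ∀ i j, g i * g j + g j * g i = if i = j then (2 : A) else 0)
    (j : ℕ) : star (GammaOf g j) = GammaOf g j := by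
  by_cases hj : j < M - 1
  · rw [GammaOf, dif_pos hj, star_smul, star_mul, hherm, hherm, Complex.star_def,
      Complex.conj_I]
    rw [ganti g hcl (show (⟨j + (M-1), by omega⟩ : Fin (2*(M-1))) ≠ ⟨j, by omega⟩ from
      (by simp only [ne_eq, Fin.mk.injEq]; omega))]
    rw [smul_neg, neg_smul, neg_neg]
  · rw [GammaOf, dif_neg hj, star_one]

lemma Gamma_sq (hcl : ∀ i j, g i * g j + g j * g i = if i = j then (2 : A) else 0)
    (j : ℕ) : GammaOf g j * GammaOf g j = 1 := by
  by_cases hj : j < M - 1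
  · rw [GammaOf, dif_pos hj]
    set x := g ⟨j, by omega⟩ with hx
    set y := g ⟨j + (M-1), by omega⟩ with hy
    have hyx : y * x = -(x * y) := ganti g hcl ((by simp only [ne_eq, Fin.mk.injEq]; omega))
    have hyx' : ∀ z : A, y * (x * z) = -(x * (y * z)) := fun z => by
      rw [← mul_assoc, hyx, neg_mul, mul_assoc]
    have hxx : x * x = 1 := gsq g hcl _
    have hyy : y * y = 1 := gsq g hcl _
    have key : (x * y) * (x * y) = -1 := by
      simp [mul_assoc, hyx', hxx, hyy]
    rw [smul_mul_assoc, mul_smul_comm, smul_smul, key, Complex.I_mul_I]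
    simp
  · rw [GammaOf, dif_neg hj, one_mul]

lemma Gamma_comm_Gamma (hcl : ∀ i j, g i * g j + g j * g i = if i = j then (2 : A) else 0)
    (j k : ℕ) : Commute (GammaOf g j) (GammaOf g k) := by
  show GammaOf g j * GammaOf g k = GammaOf g k * GammaOf g j
  rcases eq_or_ne j k with rfl | hjk
  · rfl
  by_cases hj : j < M - 1
  · by_cases hk : k < M - 1
    · rw [GammaOf, GammaOf, dif_pos hj, dif_pos hk]
      set a := g ⟨j, by omega⟩ with ha
      set b := g ⟨j + (M-1), by omega⟩ with hb
      set c := g ⟨k, by omega⟩ with hc0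
      set d := g ⟨k + (M-1), by omega⟩ with hd0
      have hca : c * a = -(a * c) := ganti g hcl ((by simp only [ne_eq, Fin.mk.injEq]; omega))
      have hcb : c * b = -(b * c) := ganti g hcl ((by simp only [ne_eq, Fin.mk.injEq]; omega))
      have hda : d * a = -(a * d) := ganti g hcl ((by simp only [ne_eq, Fin.mk.injEq]; omega))
      have hdb : d * b = -(b * d) := ganti g hcl ((by simp only [ne_eq, Fin.mk.injEq]; omega))
      have hc : c * (a * b) = (a * b) * c := comm_left_of_anti hca hcb
      have hd : d * (a * b) = (a * b) * d := comm_left_of_anti hda hdb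
      have h : (a * b) * (c * d) = (c * d) * (a * b) := by
        calc (a*b) * (c*d) = ((a*b)*c)*d := (mul_assoc _ _ _).symm
          _ = c*((a*b)*d) := by rw [← hc, mul_assoc]
          _ = c*(d*(a*b)) := by rw [← hd]
          _ = (c*d)*(a*b) := (mul_assoc _ _ _).symm
      simp only [smul_mul_assoc, mul_smul_comm, h]
    · rw [Gamma_of_ge g k hk, one_mul, mul_one]
  · rw [Gamma_of_ge g j hj, one_mul, mul_one]

lemma Gamma_comm_g (hcl : ∀ i j, g i * g j + g j * g i = if i = j then (2 : A) else 0)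
    (j : ℕ) (i : Fin (2 * (M - 1))) (h1 : i.val ≠ j) (h2 : i.val ≠ j + (M - 1)) :
    Commute (GammaOf g j) (g i) := by
  show GammaOf g j * g i = g i * GammaOf g j
  by_cases hj : j < M - 1
  · rw [GammaOf, dif_pos hj]
    set a := g ⟨j, by omega⟩ with ha
    set b := g ⟨j + (M-1), by omega⟩ with hb
    have h1' : g i * a = -(a * g i) := ganti g hcl ((by simp only [ne_eq, Fin.mk.injEq, Fin.ext_iff]; omega))
    have h2' : g i * b = -(b * g i) := ganti g hcl ((by simp only [ne_eq, Fin.mk.injEq, Fin.ext_iff]; omega))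
    have h : g i * (a * b) = (a * b) * g i := comm_left_of_anti h1' h2'
    rw [smul_mul_assoc, mul_smul_comm, h]
  · rw [GammaOf, dif_neg hj, one_mul, mul_one]

lemma Gamma_anti_g (hcl : ∀ i j, g i * g j + g j * g i = if i = j then (2 : A) else 0)
    (i : Fin (2 * (M - 1))) (h : i.val < M - 1) :
    GammaOf g i.val * g i = -(g i * GammaOf g i.val) := by
  rw [GammaOf, dif_pos h]
  have he : (⟨i.val, by omega⟩ : Fin (2 * (M - 1))) = i := rfl
  rw [he]
  set b := g ⟨i.val + (M-1), by omega⟩ with hb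
  have hbg : b * g i = -(g i * b) := ganti g hcl (by
    intro hc
    have := congrArg Fin.val hc
    simp only [Fin.val_mk] at this
    omega)
  have key : (g i * b) * g i = -(g i * (g i * b)) := by
    rw [mul_assoc, hbg, mul_neg]
  rw [smul_mul_assoc, key, mul_smul_comm, smul_neg]


noncomputable def Pprod (g : Fin (2 * (M - 1)) → A) (c : ℕ → ℕ) (m : ℕ) : A :=
  ((List.range m).map fun j => GammaOf g j ^ c j).prod

lemma Pprod_succ (c : ℕ → ℕ) (m : ℕ) :
    Pprod g c (m + 1) = Pprod g c m * GammaOf g m ^ c m := by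
  simp [Pprod, List.range_succ]

lemma Pprod_zero (c : ℕ → ℕ) : Pprod g c 0 = 1 := by simp [Pprod]

lemma Gamma_comm_P (hcl : ∀ i j, g i * g j + g j * g i = if i = j then (2 : A) else 0)
    (j : ℕ) (c : ℕ → ℕ) (m : ℕ) : Commute (GammaOf g j) (Pprod g c m) := by
  induction m with
  | zero => rw [Pprod_zero]; exact Commute.one_right _
  | succ m ih =>
    rw [Pprod_succ]
    exact Commute.mul_right ih ((Gamma_comm_Gamma g hcl j m).pow_right _)

lemma P_comm_P (hcl : ∀ i j, g i * g j + g j * g i = if i = j then (2 : A) else 0)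
    (c c' : ℕ → ℕ) (m m' : ℕ) : Commute (Pprod g c m) (Pprod g c' m') := by
  induction m with
  | zero => rw [Pprod_zero]; exact Commute.one_left _
  | succ m ih =>
    rw [Pprod_succ]
    exact Commute.mul_left ih ((Gamma_comm_P g hcl m c' m').pow_left _)

lemma P_star (hherm : ∀ i, star (g i) = g i)
    (hcl : ∀ i j, g i * g j + g j * g i = if i = j then (2 : A) else 0)
    (c : ℕ → ℕ) (m : ℕ) : star (Pprod g c m) = Pprod g c m := by
  induction m with
  | zero => rw [Pprod_zero, star_one]
  | succ m ih =>
    rw [Pprod_succ, star_mul, star_pow, Gamma_star g hherm hcl, ih]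
    exact ((Gamma_comm_P g hcl m c m).pow_left _).eq

lemma P_sq (hcl : ∀ i j, g i * g j + g j * g i = if i = j then (2 : A) else 0)
    (c : ℕ → ℕ) (m : ℕ) : Pprod g c m * Pprod g c m = 1 := by
  induction m with
  | zero => rw [Pprod_zero, one_mul]
  | succ m ih =>
    rw [Pprod_succ]
    have hcomm := ((Gamma_comm_P g hcl m c m).pow_left (c m)).eq
    have hGsq : GammaOf g m ^ c m * GammaOf g m ^ c m = 1 := by
      rw [← pow_add, ← two_mul, pow_mul, pow_two, Gamma_sq g hcl, one_pow]
    calc Pprod g c m * GammaOf g m ^ c m * (Pprod g c m * GammaOf g m ^ c m)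
        = Pprod g c m * (GammaOf g m ^ c m * Pprod g c m) * GammaOf g m ^ c m := by
          rw [mul_assoc, mul_assoc, mul_assoc]
      _ = Pprod g c m * Pprod g c m * (GammaOf g m ^ c m * GammaOf g m ^ c m) := by
          rw [hcomm, mul_assoc, mul_assoc, mul_assoc]
      _ = 1 := by rw [ih, hGsq, one_mul]

lemma g_P_step {P X x : A} {e1 e2 : ℕ} (h1 : x * P = (-1:A)^e1 * (P * x))
    (h2 : x * X = (-1:A)^e2 * (X * x)) :
    x * (P * X) = (-1:A)^(e1+e2) * (P * X * x) := by
  have hc : P * ((-1:A)^e2 * (X * x)) = (-1:A)^e2 * (P * (X * x)) := by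
    rw [← mul_assoc, ← ((Commute.neg_one_left P).pow_left e2).eq, mul_assoc]
  calc x * (P * X) = (x * P) * X := (mul_assoc _ _ _).symm
    _ = (-1:A)^e1 * (P * (x * X)) := by rw [h1, mul_assoc, mul_assoc]
    _ = (-1:A)^e1 * (P * ((-1:A)^e2 * (X * x))) := by rw [h2]
    _ = (-1:A)^e1 * ((-1:A)^e2 * (P * (X * x))) := by rw [hc]
    _ = (-1:A)^(e1+e2) * (P * X * x) := by
        rw [← mul_assoc, ← pow_add, mul_assoc P]

lemma g_P (hcl : ∀ i j, g i * g j + g j * g i = if i = j then (2 : A) else 0)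
    (i : Fin (2 * (M - 1))) (hi : i.val < M - 1) (c : ℕ → ℕ) (m : ℕ) :
    g i * Pprod g c m = (-1 : A) ^ (if i.val < m then c i.val else 0) * (Pprod g c m * g i) := by
  induction m with
  | zero => simp [Pprod_zero]
  | succ m ih =>
    rw [Pprod_succ]
    rcases lt_trichotomy i.val m with hlt | heq | hgt
    · rw [if_pos hlt] at ih
      have h2 : g i * GammaOf g m ^ c m = (-1:A)^0 * (GammaOf g m ^ c m * g i) := by
        rw [pow_zero, one_mul]
        exact (((Gamma_comm_g g hcl m i (by omega) (by omega)).symm).pow_right _).eq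
      rw [if_pos (show i.val < m + 1 by omega)]
      simpa using g_P_step ih h2
    · rw [if_neg (by omega)] at ih
      rw [pow_zero, one_mul] at ih
      have ih' : g i * Pprod g c m = (-1:A)^0 * (Pprod g c m * g i) := by
        rw [pow_zero, one_mul]; exact ih
      have hag := Gamma_anti_g g hcl i (by omega)
      rw [heq] at hag
      have hanti : g i * GammaOf g m = -(GammaOf g m * g i) := by
        rw [hag, neg_neg]
      have h2 := anti_pow hanti (c m)
      rw [if_pos (show i.val < m + 1 by omega), heq]
      simpa using g_P_step ih' h2
    · rw [if_neg (by omega)] at ih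
      rw [pow_zero, one_mul] at ih
      have ih' : g i * Pprod g c m = (-1:A)^0 * (Pprod g c m * g i) := by
        rw [pow_zero, one_mul]; exact ih
      have h2 : g i * GammaOf g m ^ c m = (-1:A)^0 * (GammaOf g m ^ c m * g i) := by
        rw [pow_zero, one_mul]
        exact (((Gamma_comm_g g hcl m i (by omega) (by omega)).symm).pow_right _).eq
      rw [if_neg (show ¬ i.val < m + 1 by omega)]
      simpa using g_P_step ih' h2


lemma conj_step {P Q x : A} {e : ℕ} (hPQ : P * Q = Q * P)
    (hxQ : x * Q = (-1:A)^e * (Q * x)) :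
    (P * x) * Q = (-1:A)^e * (Q * (P * x)) := by
  calc (P*x)*Q = P*(x*Q) := mul_assoc _ _ _
    _ = P*((-1:A)^e*(Q*x)) := by rw [hxQ]
    _ = (-1:A)^e*(P*(Q*x)) := by
        rw [← mul_assoc, ← ((Commute.neg_one_left P).pow_left e).eq, mul_assoc]
    _ = (-1:A)^e*((P*Q)*x) := by rw [← mul_assoc P Q x]
    _ = (-1:A)^e*(Q*(P*x)) := by rw [hPQ, mul_assoc]

lemma conj_step2 {P Q x y : A} {e : ℕ} (hPQ : P * Q = Q * P)
    (hxQ : x * Q = (-1:A)^e * (Q * x)) (hyP : y * P = P * y)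
    (hxy : x * y = -(y * x)) :
    (P*x)*(Q*y) = (-1:A)^(e+1) * ((Q*y)*(P*x)) := by
  have h1 : (P*x)*Q = (-1:A)^e * (Q*(P*x)) := conj_step hPQ hxQ
  calc (P*x)*(Q*y) = ((P*x)*Q)*y := (mul_assoc _ _ _).symm
    _ = (-1:A)^e * (Q*(P*x)*y) := by rw [h1, mul_assoc]
    _ = (-1:A)^e * (Q*(P*(x*y))) := by rw [mul_assoc Q, mul_assoc P]
    _ = (-1:A)^e * (Q*(P*(-(y*x)))) := by rw [hxy]
    _ = (-1:A)^(e+1) * (Q*(P*(y*x))) := by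
        rw [pow_succ]
        simp only [mul_neg, neg_mul, neg_one_mul, one_mul, mul_assoc]
    _ = (-1:A)^(e+1) * ((Q*y)*(P*x)) := by
        rw [← mul_assoc P y x, ← hyP, mul_assoc y, ← mul_assoc Q y]

end Aux

section Dot

lemma dot_lt_two {n M : ℕ} (a : Fin M → Fin n → ZMod 2) (k ℓ : ℕ) : dotOf a k ℓ < 2 := by
  unfold dotOf
  split
  · exact ZMod.val_lt _
  · omega

lemma dot_eq_zero {n M : ℕ} (a : Fin M → Fin n → ZMod 2) (k ℓ : Fin M)
    (h : (∑ j, a k j * a ℓ j) = 0) : dotOf a k.val ℓ.val = 0 := by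
  unfold dotOf
  rw [dif_pos (⟨k.2, ℓ.2⟩ : k.val < M ∧ ℓ.val < M)]
  show (∑ j, a k j * a ℓ j).val = 0
  rw [h]
  rfl

lemma dot_eq_one {n M : ℕ} (a : Fin M → Fin n → ZMod 2) (k ℓ : Fin M)
    (h : (∑ j, a k j * a ℓ j) = 1) : dotOf a k.val ℓ.val = 1 := by
  unfold dotOf
  rw [dif_pos (⟨k.2, ℓ.2⟩ : k.val < M ∧ ℓ.val < M)]
  show (∑ j, a k j * a ℓ j).val = 1
  rw [h]
  rfl

end Dot

section GmaxUnfold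

variable {A : Type*} [Ring A] [Algebra ℂ A] {n M : ℕ}

lemma Gmax_last (g : Fin (2 * (M - 1)) → A) (a : Fin M → Fin n → ZMod 2)
    (k : Fin M) (hk : k.val + 1 = M) :
    Gmax g a k = Pprod g (fun j => 1 - dotOf a j k.val) (M - 1) := by
  rw [Gmax, if_pos hk]; rfl

lemma Gmax_mid (g : Fin (2 * (M - 1)) → A) (a : Fin M → Fin n → ZMod 2)
    (k : Fin M) (hk : k.val + 1 ≠ M) (h2 : k.val < M - 1) :
    Gmax g a k = Pprod g (fun j => dotOf a j k.val) k.val * g ⟨k.val, by omega⟩ := by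
  rw [Gmax, if_neg hk, dif_pos h2]; rfl

end GmaxUnfold

/-- each G_k is hermitian with G_k² = 1, and for k < ℓ,
    {G_k, G_ℓ} = 0 if a_k·a_ℓ = 0 and [G_k, G_ℓ] = 0 if a_k·a_ℓ = 1. -/
theorem Gmax_properties {A : Type*} [Ring A] [StarRing A] [Algebra ℂ A] [StarModule ℂ A]
    {n M : ℕ} (hn : 1 ≤ n) (hM : M = 2 ^ (n - 1))
    (a : Fin M → Fin n → ZMod 2)
    (hpar : ∀ k, (∑ j, a k j) = 1) (hinj : Function.Injective a)
    (g : Fin (2 * (M - 1)) → A)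
    (hherm : ∀ i, star (g i) = g i)
    (hcl : ∀ i j, g i * g j + g j * g i = if i = j then (2 : A) else 0) :
    (∀ k : Fin M, star (Gmax g a k) = Gmax g a k ∧ Gmax g a k * Gmax g a k = 1) ∧
    (∀ k ℓ : Fin M, k < ℓ →
      ((∑ j, a k j * a ℓ j) = 0 → Gmax g a k * Gmax g a ℓ + Gmax g a ℓ * Gmax g a k = 0) ∧
      ((∑ j, a k j * a ℓ j) = 1 → Gmax g a k * Gmax g a ℓ - Gmax g a ℓ * Gmax g a k = 0)) := by
  constructor
  · intro k
    by_cases hk : k.val + 1 = M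
    · rw [Gmax_last g a k hk]
      exact ⟨P_star g hherm hcl _ _, P_sq g hcl _ _⟩
    · have hk2 : k.val < M - 1 := by have := k.2; omega
      rw [Gmax_mid g a k hk hk2]
      have hgp := g_P g hcl ⟨k.val, by omega⟩ hk2 (fun j => dotOf a j k.val) k.val
      rw [if_neg (lt_irrefl k.val), pow_zero, one_mul] at hgp
      constructor
      · rw [star_mul, hherm, P_star g hherm hcl, hgp]
      · set P := Pprod g (fun j => dotOf a j k.val) k.val with hP
        set x := g (⟨k.val, by omega⟩ : Fin (2*(M-1))) with hx
        calc P * x * (P * x) = P * ((x * P) * x) := by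
              rw [mul_assoc, ← mul_assoc x]
          _ = P * ((P * x) * x) := by rw [hgp]
          _ = (P * P) * (x * x) := by rw [mul_assoc P x, ← mul_assoc, ← mul_assoc]
          _ = 1 := by rw [P_sq g hcl, gsq g hcl, one_mul]
  · intro k ℓ hkl
    have hv : k.val < ℓ.val := hkl
    have hl2' := ℓ.2
    have hkM : k.val + 1 ≠ M := by omega
    have hk2 : k.val < M - 1 := by omega
    have hdlt := dot_lt_two a k.val ℓ.val
    have key : Gmax g a k * Gmax g a ℓ
        = (-1:A)^(dotOf a k.val ℓ.val + 1) * (Gmax g a ℓ * Gmax g a k) := by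
      by_cases hl : ℓ.val + 1 = M
      · rw [Gmax_last g a ℓ hl, Gmax_mid g a k hkM hk2]
        have hgp := g_P g hcl ⟨k.val, by omega⟩ hk2 (fun j => 1 - dotOf a j ℓ.val) (M-1)
        rw [if_pos hk2] at hgp
        have hpp := (P_comm_P g hcl (fun j => dotOf a j k.val)
          (fun j => 1 - dotOf a j ℓ.val) k.val (M-1)).eq
        have h1 := conj_step hpp hgp
        rw [h1]
        have hsign : (-1:A)^(1 - dotOf a k.val ℓ.val) = (-1:A)^(dotOf a k.val ℓ.val + 1) := by
          rcases (by omega : dotOf a k.val ℓ.val = 0 ∨ dotOf a k.val ℓ.val = 1) with h | h <;>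
            rw [h] <;> norm_num
        rw [hsign]
      · have hl2 : ℓ.val < M - 1 := by omega
        rw [Gmax_mid g a ℓ hl hl2, Gmax_mid g a k hkM hk2]
        have hgpQ := g_P g hcl ⟨k.val, by omega⟩ hk2 (fun j => dotOf a j ℓ.val) ℓ.val
        rw [if_pos hv] at hgpQ
        have hgpP := g_P g hcl ⟨ℓ.val, by omega⟩ hl2 (fun j => dotOf a j k.val) k.val
        rw [if_neg (show ¬ (ℓ.val < k.val) by omega), pow_zero, one_mul] at hgpP
        have hpp := (P_comm_P g hcl (fun j => dotOf a j k.val)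
          (fun j => dotOf a j ℓ.val) k.val ℓ.val).eq
        have hxy : g (⟨k.val, by omega⟩ : Fin (2*(M-1))) * g ⟨ℓ.val, by omega⟩
            = -(g ⟨ℓ.val, by omega⟩ * g ⟨k.val, by omega⟩) :=
          ganti g hcl (by simp only [ne_eq, Fin.mk.injEq]; omega)
        exact conj_step2 hpp hgpQ hgpP hxy
    refine ⟨fun h0 => ?_, fun h1 => ?_⟩
    · rw [key, dot_eq_zero a k ℓ h0]
      simp
    · rw [key, dot_eq_one a k ℓ h1]
      norm_num
end
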